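/- Assume: φ ∈ C([0,∞)) ∩ C¹((0,∞)) with φ(0) = 0, φ' > 0 on (0,∞), and t·φ'(t) ≤ C·φ(t) for every t > 0, for some constant C > 0. Fix χ > 0 and let f ∈ C(ℝ) be positive and C-increasing on (η̄₀,∞) for some η̄₀ > 0. Fix r₀ > 0; let β ∈ C([r₀,∞)) with β > 0, and β̄ ∈ C¹([r₀,∞)) with β̄ > 0, β̄' ≤ 0 and ∫_{r₀}^∞ β̄ = ∞; let θ ∈ C([r₀,∞)) be nonnegative with max{β̄,θ}·β̄^{χ}/β bounded on [r₀,∞). Set F(t) = ∫_{η̄₀}^t f(s) ds and assume ∫_T^∞ F(s)^{−1/(χ+1)} ds < ∞ for some T > η̄₀. Then for every ε > 0, every 0 < δ < λ and every r₁ > r₀, there exist R₁ > r₁ and a C¹ function w : [r₀,R₁) → [η̄₀+δ,∞) such that: φ∘w' is differentiable on (r₀,R₁) and (φ(w'))'(r) + θ(r)·φ(w'(r)) ≤ ε·β(r)·f(w(r))·φ(w'(r))/(w'(r))^{χ} on (r₀,R₁); w' > 0 on [r₀,R₁); w(r) → ∞ as r → R₁⁻; and η̄₀+δ ≤ w ≤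 η̄₀+λ on [r₀,r₁]. -/

import Mathlib

open Set MeasureTheory Filter Topology

/-!
Put `q = 1/(χ+1)`, `t₀ = η̄₀ + δ` and define `w` implicitly by
`∫_{t₀}^{w(r)} F^{-q} = k ∫_{r₀}^r β̄`. By the Keller–Osserman condition the left side stays below
`I = ∫_{t₀}^∞ F^{-q}`, while the right side is unbounded because `β̄ ∉ L¹`; hence `w` blows up at
the radius `R₁` where `k ∫_{r₀}^{R₁} β̄ = I`. Differentiating, `w' = k β̄ F(w)^q`, and since
`β̄' ≤ 0` and `t φ'(t) ≤ C φ(t)`, `(φ(w'))' ≤ C φ(w') k β̄ q f(w) F(w)^{q-1}`. After multiplying by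
`w'^χ = k^χ β̄^χ F(w)^{1-q}`, this term and `θ φ(w')` are both `O(k^χ) β f(w) φ(w')`, by
`β̄^{χ+1}, θ β̄^χ ≤ M β` and `F^{1-q} ≤ K f`; the last bound holds because `F(t) ≤ C f(t) (t - η̄₀)`
for a `C`-increasing `f`, while `(t - η̄₀) F(t)^{-q}` is bounded since `F^{-q}` is decreasing and
integrable. A small `k` thus gives the differential inequality and keeps `w ≤ η̄₀ + λ` on
`[r₀, r₁]`.
-/

/-- Given `C ≥ 1`, a function `h` is `C`-increasing on `I` if
`sup {h s : s ∈ I, s ≤ t} ≤ C * h t` for every `t ∈ I`. -/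
def CIncreasingOn (C : ℝ) (h : ℝ → ℝ) (I : Set ℝ) : Prop :=
  ∀ s ∈ I, ∀ t ∈ I, s ≤ t → h s ≤ C * h t

open Function intervalIntegral

/-- Freezing `ψ` at `ψ a` to the left of `a` makes the primitive `C¹` on all of `ℝ`, so no
one-sided derivatives at `a` are needed. -/
noncomputable def clampedPrimitive (ψ : ℝ → ℝ) (a u : ℝ) : ℝ := ∫ s in a..u, ψ (max s a)

section clampedPrimitive

variable {ψ : ℝ → ℝ} {a u : ℝ}

theorem continuous_comp_max (hψ : ContinuousOn ψ (Ici a)) : Continuous fun s => ψ (max s a) :=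
  hψ.comp_continuous (continuous_id.max continuous_const) fun s => le_max_right s a

theorem hasDerivAt_clampedPrimitive (hψ : ContinuousOn ψ (Ici a)) (u : ℝ) :
    HasDerivAt (clampedPrimitive ψ a) (ψ (max u a)) u :=
  ((continuous_comp_max hψ).integral_hasStrictDerivAt a u).hasDerivAt

theorem continuous_clampedPrimitive (hψ : ContinuousOn ψ (Ici a)) :
    Continuous (clampedPrimitive ψ a) :=
  continuous_iff_continuousAt.2 fun u => (hasDerivAt_clampedPrimitive hψ u).continuousAt

theorem clampedPrimitive_self : clampedPrimitive ψ a a = 0 := integral_same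

theorem strictMono_clampedPrimitive (hψ : ContinuousOn ψ (Ici a))
    (hpos : ∀ s ∈ Ici a, 0 < ψ s) : StrictMono (clampedPrimitive ψ a) :=
  strictMono_of_hasDerivAt_pos (hasDerivAt_clampedPrimitive hψ) fun u =>
    hpos _ (le_max_right u a)

theorem clampedPrimitive_of_le (hu : u ≤ a) : clampedPrimitive ψ a u = ψ a * (u - a) := by
  have hconst : ∀ s ∈ uIcc a u, ψ (max s a) = ψ a := fun s hs => by
    rw [max_eq_right (uIcc_of_ge hu ▸ hs).2]
  rw [clampedPrimitive, integral_congr hconst, intervalIntegral.integral_const, smul_eq_mul,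
    mul_comm]

theorem clampedPrimitive_of_ge (hu : a ≤ u) : clampedPrimitive ψ a u = ∫ s in a..u, ψ s :=
  integral_congr fun s hs => by rw [max_eq_left (uIcc_of_le hu ▸ hs).1]

theorem tendsto_clampedPrimitive_atBot (hpos : 0 < ψ a) :
    Tendsto (clampedPrimitive ψ a) atBot atBot := by
  have hlin : Tendsto (fun u => ψ a * (u - a)) atBot atBot :=
    (tendsto_atBot_add_const_right _ (-a) tendsto_id).const_mul_atBot hpos
  exact hlin.congr' ((eventually_le_atBot a).mono fun u hu => (clampedPrimitive_of_le hu).symm)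

theorem range_clampedPrimitive (hψ : ContinuousOn ψ (Ici a)) (hpos : ∀ s ∈ Ici a, 0 < ψ s)
    (hint : IntegrableOn ψ (Ioi a)) :
    range (clampedPrimitive ψ a) = Iio (∫ s in Ioi a, ψ s) := by
  have hmono := strictMono_clampedPrimitive hψ hpos
  have htop : Tendsto (clampedPrimitive ψ a) atTop (𝓝 (∫ s in Ioi a, ψ s)) :=
    (intervalIntegral_tendsto_integral_Ioi a hint tendsto_id).congr'
      ((eventually_ge_atTop a).mono fun u hu => (clampedPrimitive_of_ge hu).symm)
  refine Subset.antisymm ?_ fun y hy => ?_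
  · rintro _ ⟨u, rfl⟩
    exact (hmono (lt_add_one u)).trans_le (hmono.monotone.ge_of_tendsto htop _)
  · exact mem_range_of_exists_le_of_exists_ge (continuous_clampedPrimitive hψ)
      ((tendsto_clampedPrimitive_atBot (hpos a self_mem_Ici)).eventually_le_atBot y).exists
      ((htop.eventually (lt_mem_nhds hy)).mono fun _ h => h.le).exists

theorem tendsto_clampedPrimitive_atTop (hψ : ContinuousOn ψ (Ici a))
    (hpos : ∀ s ∈ Ici a, 0 < ψ s) (hint : ¬IntegrableOn ψ (Ioi a)) :
    Tendsto (clampedPrimitive ψ a) atTop atTop := by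
  refine tendsto_atTop_atTop_of_monotone (strictMono_clampedPrimitive hψ hpos).monotone ?_
  by_contra! hbdd
  obtain ⟨A, hA⟩ := hbdd
  refine hint (integrableOn_Ioi_of_intervalIntegral_norm_bounded A a
    (fun i => (hψ.mono Icc_subset_Ici_self).integrableOn_Icc.mono_set Ioc_subset_Icc_self)
    tendsto_id ?_)
  filter_upwards [eventually_ge_atTop a] with i hi
  have hnorm : ∀ s ∈ uIcc a i, ‖ψ s‖ = ψ s := fun s hs =>
    Real.norm_of_nonneg (hpos s (uIcc_of_le hi ▸ hs).1).le
  rw [id, integral_congr hnorm, ← clampedPrimitive_of_ge hi]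
  exact (hA i).le

end clampedPrimitive

section invFun

variable {G : ℝ → ℝ} {I : ℝ}

theorem hasDerivAt_invFun_of_range_mem_nhds {G' : ℝ → ℝ} {y : ℝ}
    (hder : ∀ u, HasDerivAt G (G' u) u) (hpos : ∀ u, 0 < G' u) (hy : range G ∈ 𝓝 y) :
    HasDerivAt (invFun G) (G' (invFun G y))⁻¹ y := by
  have hG : StrictMono G := strictMono_of_hasDerivAt_pos hder hpos
  have hright : ∀ z ∈ range G, G (invFun G z) = z := fun z hz => invFun_eq hz
  have hmono : MonotoneOn (invFun G) (range G) := fun z₁ h₁ z₂ h₂ h => by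
    rwa [← hG.le_iff_le, hright z₁ h₁, hright z₂ h₂]
  have himage : invFun G '' range G = univ :=
    eq_univ_of_forall fun u => ⟨G u, mem_range_self u, leftInverse_invFun hG.injective u⟩
  refine .of_local_left_inverse ?_ (hder _) (hpos _).ne' (eventually_of_mem hy hright)
  exact continuousAt_of_monotoneOn_of_image_mem_nhds hmono hy (by rw [himage]; exact univ_mem)

theorem StrictMono.le_invFun_iff (hG : StrictMono G) (hrange : range G = Iio I) {u y : ℝ}
    (hy : y < I) : u ≤ invFun G y ↔ G u ≤ y := by
  rw [← hG.le_iff_le, invFun_eq (hrange ▸ hy : y ∈ range G)]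

theorem StrictMono.invFun_le_iff (hG : StrictMono G) (hrange : range G = Iio I) {u y : ℝ}
    (hy : y < I) : invFun G y ≤ u ↔ y ≤ G u := by
  rw [← hG.le_iff_le, invFun_eq (hrange ▸ hy : y ∈ range G)]

theorem StrictMono.tendsto_invFun_nhdsLT (hG : StrictMono G) (hrange : range G = Iio I) :
    Tendsto (invFun G) (𝓝[<] I) atTop := by
  refine Filter.tendsto_atTop.2 fun u => ?_
  have hu : G u < I := by rw [← mem_Iio, ← hrange]; exact mem_range_self u
  filter_upwards [Ioo_mem_nhdsLT hu] with y hy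
  exact (hG.le_invFun_iff hrange hy.2).2 hy.1.le

theorem StrictMono.tendsto_invFun_comp_mul {H : ℝ → ℝ} {k R : ℝ} (hG : StrictMono G)
    (hrange : range G = Iio I) (hH : StrictMono H) (hHc : Continuous H) (hk : 0 < k)
    (hR : k * H R = I) : Tendsto (fun r => invFun G (k * H r)) (𝓝[<] R) atTop := by
  refine (hG.tendsto_invFun_nhdsLT hrange).comp ?_
  rw [← hR]
  exact tendsto_nhdsWithin_of_tendsto_nhds_of_eventually_within _
    ((hHc.const_mul k).tendsto R |>.mono_left nhdsWithin_le_nhds)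
    (eventually_nhdsWithin_of_forall fun _ hr => (hH.const_mul hk) hr)

end invFun

theorem AntitoneOn.sub_mul_le_integral_Ioi {ψ : ℝ → ℝ} {a t : ℝ} (hψ : AntitoneOn ψ (Ici a))
    (hint : IntegrableOn ψ (Ioi a)) (hnn : ∀ s ∈ Ioi a, 0 ≤ ψ s) (ht : a ≤ t) :
    (t - a) * ψ t ≤ ∫ s in Ioi a, ψ s :=
  calc (t - a) * ψ t = ∫ _ in a..t, ψ t := by rw [intervalIntegral.integral_const, smul_eq_mul]
    _ ≤ ∫ s in a..t, ψ s :=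
      integral_mono_on ht intervalIntegrable_const
        ((intervalIntegrable_iff_integrableOn_Ioc_of_le ht).2 (hint.mono_set Ioc_subset_Ioi_self))
        fun s hs => hψ hs.1 (hs.1.trans hs.2) hs.2
    _ ≤ ∫ s in Ioi a, ψ s := by
      rw [integral_of_le ht]
      exact setIntegral_mono_set hint ((ae_restrict_iff' measurableSet_Ioi).2 (ae_of_all _ hnn))
        Ioc_subset_Ioi_self.eventuallyLE

theorem MeasureTheory.IntegrableOn.Ioi_of_continuousOn {ψ : ℝ → ℝ} {a T : ℝ}
    (hT : IntegrableOn ψ (Ioi T)) (hψ : ContinuousOn ψ (Ici a)) : IntegrableOn ψ (Ioi a) :=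
  ((hψ.mono Icc_subset_Ici_self).integrableOn_Icc.union hT).mono_set fun x hx =>
    (le_or_gt x T).imp (fun h => ⟨le_of_lt hx, h⟩) id

section primitive

variable {f F : ℝ → ℝ} {a C : ℝ}

theorem hasDerivAt_of_eq_integral (hf : Continuous f) (hF : ∀ t, F t = ∫ s in a..t, f s)
    (t : ℝ) : HasDerivAt F (f t) t := by
  obtain rfl : F = fun t => ∫ s in a..t, f s := funext hF
  exact (hf.integral_hasStrictDerivAt a t).hasDerivAt

theorem pos_of_eq_integral (hf : Continuous f) (hpos : ∀ t, a < t → 0 < f t)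
    (hF : ∀ t, F t = ∫ s in a..t, f s) {t : ℝ} (ht : a < t) : 0 < F t := by
  rw [hF]
  exact intervalIntegral_pos_of_pos_on (hf.intervalIntegrable _ _) (fun s hs => hpos s hs.1) ht

theorem monotoneOn_of_eq_integral (hf : Continuous f) (hpos : ∀ t, a < t → 0 < f t)
    (hF : ∀ t, F t = ∫ s in a..t, f s) : MonotoneOn F (Ici a) := by
  have hder := hasDerivAt_of_eq_integral hf hF
  refine monotoneOn_of_deriv_nonneg (convex_Ici a)
    (fun t _ => (hder t).continuousAt.continuousWithinAt)
    (fun t _ => (hder t).differentiableAt.differentiableWithinAt) fun t ht => ?_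
  rw [interior_Ici] at ht
  rw [(hder t).deriv]
  exact (hpos t ht).le

theorem le_mul_sub_of_cIncreasingOn (hf : Continuous f) (hinc : CIncreasingOn C f (Ioi a))
    (hF : ∀ t, F t = ∫ s in a..t, f s) {t : ℝ} (ht : a < t) : F t ≤ C * f t * (t - a) :=
  calc F t ≤ ∫ _ in a..t, C * f t := by
        rw [hF]
        exact integral_mono_on_of_le_Ioo ht.le (hf.intervalIntegrable _ _)
          intervalIntegrable_const fun s hs => hinc s hs.1 t ht hs.2.le
    _ = C * f t * (t - a) := by rw [intervalIntegral.integral_const, smul_eq_mul, mul_comm]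

theorem exists_rpow_le_mul_of_integrableOn (hf : Continuous f) (hpos : ∀ t, a < t → 0 < f t)
    (hinc : CIncreasingOn C f (Ioi a)) (hC : 0 ≤ C) (hF : ∀ t, F t = ∫ s in a..t, f s)
    {q t₀ : ℝ} (hq : 0 ≤ q) (ht₀ : a < t₀)
    (hint : IntegrableOn (fun s => F s ^ (-q)) (Ioi t₀)) :
    ∃ K, ∀ t ∈ Ici t₀, F t ^ (1 - q) ≤ K * f t := by
  have hFpos : ∀ t ∈ Ici t₀, 0 < F t := fun t ht =>
    pos_of_eq_integral hf hpos hF (ht₀.trans_le ht)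
  have hψanti : AntitoneOn (fun s => F s ^ (-q)) (Ici t₀) := fun s hs t ht hst =>
    Real.rpow_le_rpow_of_nonpos (hFpos s hs) (monotoneOn_of_eq_integral hf hpos hF
      (mem_Ici.2 (ht₀.le.trans hs)) (mem_Ici.2 (ht₀.le.trans ht)) hst) (neg_nonpos.2 hq)
  have hψnn : ∀ s ∈ Ioi t₀, 0 ≤ F s ^ (-q) := fun s hs =>
    (Real.rpow_pos_of_pos (hFpos s (mem_Ici.2 (le_of_lt hs))) _).le
  set B := (∫ s in Ioi t₀, F s ^ (-q)) + (t₀ - a) * F t₀ ^ (-q)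
  refine ⟨C * B, fun t ht => ?_⟩
  have hFt := hFpos t ht
  have hweight : (t - a) * F t ^ (-q) ≤ B :=
    calc (t - a) * F t ^ (-q) = (t - t₀) * F t ^ (-q) + (t₀ - a) * F t ^ (-q) := by ring
      _ ≤ B := add_le_add (hψanti.sub_mul_le_integral_Ioi hint hψnn ht)
        (mul_le_mul_of_nonneg_left (hψanti self_mem_Ici ht ht) (sub_nonneg.2 ht₀.le))
  calc F t ^ (1 - q) = F t * F t ^ (-q) := by
        rw [sub_eq_add_neg, Real.rpow_add hFt, Real.rpow_one]
    _ ≤ C * f t * (t - a) * F t ^ (-q) :=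
      mul_le_mul_of_nonneg_right (le_mul_sub_of_cIncreasingOn hf hinc hF (ht₀.trans_le ht))
        (Real.rpow_pos_of_pos hFt _).le
    _ = C * f t * ((t - a) * F t ^ (-q)) := by ring
    _ ≤ C * f t * B :=
      mul_le_mul_of_nonneg_left hweight (mul_nonneg hC (hpos t (ht₀.trans_le ht)).le)
    _ = C * B * f t := by ring

end primitive

section supersolutionInequality

variable {C χ q k b b' B θ M K y z : ℝ}

theorem rpow_scaled_profile (hq : q * (χ + 1) = 1) (hk : 0 < k) (hb : 0 < b) (hy : 0 < y) :
    (k * b * y ^ q) ^ χ = k ^ χ * b ^ χ * y ^ (1 - q) := by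
  rw [Real.mul_rpow (by positivity) (by positivity), Real.mul_rpow hk.le hb.le,
    ← Real.rpow_mul hy.le, show q * χ = 1 - q by linarith]

theorem mul_profile_deriv_le {v φv φ'v : ℝ} (hk : 0 ≤ k) (hb : 0 ≤ b) (hb' : b' ≤ 0)
    (hy : 0 < y) (hz : 0 ≤ z) (hq0 : 0 ≤ q) (hφ'v : 0 ≤ φ'v) (hφ : v * φ'v ≤ C * φv) :
    φ'v * (k * b' * y ^ q + k * b * (z * v * q * y ^ (q - 1))) ≤
      C * φv * (k * b * z * q * y ^ (q - 1)) := by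
  have hP : 0 ≤ k * b * z * q * y ^ (q - 1) := by positivity
  have hb'term : φ'v * (k * b' * y ^ q) ≤ 0 :=
    mul_nonpos_of_nonneg_of_nonpos hφ'v
      (mul_nonpos_of_nonpos_of_nonneg (mul_nonpos_of_nonneg_of_nonpos hk hb') (by positivity))
  calc φ'v * (k * b' * y ^ q + k * b * (z * v * q * y ^ (q - 1)))
      = φ'v * (k * b' * y ^ q) + v * φ'v * (k * b * z * q * y ^ (q - 1)) := by ring
    _ ≤ C * φv * (k * b * z * q * y ^ (q - 1)) := by nlinarith

theorem profile_terms_mul_rpow_le (hC : 0 ≤ C) (hq0 : 0 ≤ q) (hq : q * (χ + 1) = 1) (hk : 0 < k)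
    (hb : 0 < b) (hMB : max b θ * b ^ χ ≤ M * B) (hy : 0 < y) (hz : 0 < z)
    (hK : y ^ (1 - q) ≤ K * z) :
    (C * (k * b * z * q * y ^ (q - 1)) + θ) * (k * b * y ^ q) ^ χ ≤
      (C * q * M * k ^ (χ + 1) + K * M * k ^ χ) * (B * z) := by
  have hbχ : 0 ≤ b ^ χ := by positivity
  have hkχ : 0 ≤ k ^ χ := by positivity
  have hMB0 : 0 ≤ M * B := le_trans (by positivity) hMB
  have hcancel : y ^ (q - 1) * y ^ (1 - q) = 1 := by
    rw [← Real.rpow_add hy, sub_add_sub_cancel', sub_self, Real.rpow_zero]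
  have hb1 : b ^ (χ + 1) ≤ M * B := by
    rw [Real.rpow_add_one hb.ne']
    nlinarith [le_max_left b θ]
  have hθb : θ * b ^ χ ≤ M * B := by nlinarith [le_max_right b θ]
  rw [rpow_scaled_profile hq hk hb hy]
  calc (C * (k * b * z * q * y ^ (q - 1)) + θ) * (k ^ χ * b ^ χ * y ^ (1 - q))
      = C * q * z * k ^ (χ + 1) * b ^ (χ + 1) + k ^ χ * (θ * b ^ χ) * y ^ (1 - q) := by
        rw [Real.rpow_add_one hk.ne', Real.rpow_add_one hb.ne']
        linear_combination (C * q * k ^ χ * k * b ^ χ * b * z) * hcancel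
    _ ≤ C * q * z * k ^ (χ + 1) * (M * B) + k ^ χ * (M * B) * (K * z) := by gcongr
    _ = (C * q * M * k ^ (χ + 1) + K * M * k ^ χ) * (B * z) := by ring

theorem supersolution_inequality_at {ε φv φ'v : ℝ} (hC : 0 < C) (hq0 : 0 ≤ q)
    (hq : q * (χ + 1) = 1) (hk : 0 < k) (hb : 0 < b) (hb' : b' ≤ 0) (hB : 0 < B)
    (hM : max b θ * b ^ χ / B ≤ M) (hy : 0 < y) (hz : 0 < z) (hK : y ^ (1 - q) ≤ K * z)
    (hkε : C * q * M * k ^ (χ + 1) + K * M * k ^ χ ≤ ε) (hφ'v : 0 ≤ φ'v)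
    (hφ : k * b * y ^ q * φ'v ≤ C * φv) :
    φ'v * (k * b' * y ^ q + k * b * (z * (k * b * y ^ q) * q * y ^ (q - 1))) + θ * φv ≤
      ε * B * z * (φv / (k * b * y ^ q) ^ χ) := by
  set v := k * b * y ^ q
  have hvχ : 0 < v ^ χ := by positivity
  have hφv : 0 ≤ φv := by nlinarith [show 0 < v by positivity]
  have hterms := profile_terms_mul_rpow_le hC.le hq0 hq hk hb ((div_le_iff₀ hB).1 hM) hy hz hK
  calc φ'v * (k * b' * y ^ q + k * b * (z * v * q * y ^ (q - 1))) + θ * φv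
      ≤ (C * (k * b * z * q * y ^ (q - 1)) + θ) * φv := by
        nlinarith [mul_profile_deriv_le hk.le hb.le hb' hy hz.le hq0 hφ'v hφ]
    _ = (C * (k * b * z * q * y ^ (q - 1)) + θ) * v ^ χ * (φv / v ^ χ) := by field_simp
    _ ≤ ε * B * z * (φv / v ^ χ) := by
      refine mul_le_mul_of_nonneg_right ?_ (div_nonneg hφv hvχ.le)
      exact (hterms.trans (mul_le_mul_of_nonneg_right hkε (by positivity))).trans_eq (by ring)

end supersolutionInequality

theorem tendsto_mul_rpow_add_mul_rpow {a b χ : ℝ} (hχ : 0 < χ) :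
    Tendsto (fun k => a * k ^ (χ + 1) + b * k ^ χ) (𝓝 0) (𝓝 0) := by
  have hcont : ContinuousAt (fun k : ℝ => a * k ^ (χ + 1) + b * k ^ χ) 0 :=
    (continuousAt_const.mul (Real.continuousAt_rpow_const _ _ (Or.inr (by linarith)))).add
      (continuousAt_const.mul (Real.continuousAt_rpow_const _ _ (Or.inr hχ.le)))
  simpa [Real.zero_rpow hχ.ne', Real.zero_rpow (by linarith : χ + 1 ≠ 0)] using hcont.tendsto

theorem exists_scale_radius {H A : ℝ → ℝ} {r₁ J I ε : ℝ} (hH : StrictMono H) (hHc : Continuous H)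
    (hHtop : Tendsto H atTop atTop) (hJ : 0 < J) (hJI : J < I) (hA : Tendsto A (𝓝 0) (𝓝 0))
    (hε : 0 < ε) : ∃ k R, 0 < k ∧ A k ≤ ε ∧ k * H r₁ ≤ J ∧ r₁ < R ∧ k * H R = I := by
  have hsmall : Tendsto (fun k => k * H r₁) (𝓝 0) (𝓝 0) := by
    simpa using (continuous_mul_const (H r₁)).tendsto 0
  obtain ⟨k, ⟨hkA, hkJ⟩, hk⟩ := (((hA.eventually (ge_mem_nhds hε)).and
    (hsmall.eventually (ge_mem_nhds hJ))).filter_mono nhdsWithin_le_nhds |>.and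
    (self_mem_nhdsWithin : Ioi (0 : ℝ) ∈ 𝓝[>] 0)).exists
  have hr₁ : H r₁ < I / k := by rw [lt_div_iff₀ hk, mul_comm]; exact hkJ.trans_lt hJI
  obtain ⟨R, hR⟩ : I / k ∈ range H := mem_range_of_exists_le_of_exists_ge hHc ⟨r₁, hr₁.le⟩
    (hHtop.eventually_ge_atTop _).exists
  refine ⟨k, R, hk, hkA, hkJ, hH.lt_iff_lt.1 (hR ▸ hr₁), ?_⟩
  rw [hR]
  field_simp

/-- The solution `w = w(r)` of `∫_{t₀}^{w} F^{-q} = k ∫_{r₀}^r β̄`, meaningful while the right side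
stays below `∫_{t₀}^∞ F^{-q}`. -/
noncomputable def blowUpProfile (F βb : ℝ → ℝ) (q t₀ r₀ k r : ℝ) : ℝ :=
  invFun (clampedPrimitive (fun s => F s ^ (-q)) t₀) (k * clampedPrimitive βb r₀ r)

section blowUpProfile

variable {F βb : ℝ → ℝ} {q t₀ r₀ k R r : ℝ}

theorem continuousOn_rpow_neg (hF : ContinuousOn F (Ici t₀)) (hFpos : ∀ t ∈ Ici t₀, 0 < F t) :
    ContinuousOn (fun s => F s ^ (-q)) (Ici t₀) :=
  hF.rpow_const fun t ht => Or.inl (hFpos t ht).ne'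

theorem strictMono_clampedPrimitive_rpow_neg (hF : ContinuousOn F (Ici t₀))
    (hFpos : ∀ t ∈ Ici t₀, 0 < F t) : StrictMono (clampedPrimitive (fun s => F s ^ (-q)) t₀) :=
  strictMono_clampedPrimitive (continuousOn_rpow_neg hF hFpos) fun s hs =>
    Real.rpow_pos_of_pos (hFpos s hs) _

theorem range_clampedPrimitive_rpow_neg (hF : ContinuousOn F (Ici t₀))
    (hFpos : ∀ t ∈ Ici t₀, 0 < F t) (hint : IntegrableOn (fun s => F s ^ (-q)) (Ioi t₀)) :
    range (clampedPrimitive (fun s => F s ^ (-q)) t₀) = Iio (∫ s in Ioi t₀, F s ^ (-q)) :=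
  range_clampedPrimitive (continuousOn_rpow_neg hF hFpos) (fun s hs =>
    Real.rpow_pos_of_pos (hFpos s hs) _) hint

theorem mul_clampedPrimitive_lt (hβ : ContinuousOn βb (Ici r₀)) (hβpos : ∀ t ∈ Ici r₀, 0 < βb t)
    (hk : 0 < k) (hR : k * clampedPrimitive βb r₀ R = ∫ s in Ioi t₀, F s ^ (-q)) (hr : r < R) :
    k * clampedPrimitive βb r₀ r < ∫ s in Ioi t₀, F s ^ (-q) :=
  hR ▸ (mul_lt_mul_iff_right₀ hk).2 (strictMono_clampedPrimitive hβ hβpos hr)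

theorem le_blowUpProfile (hF : ContinuousOn F (Ici t₀)) (hFpos : ∀ t ∈ Ici t₀, 0 < F t)
    (hint : IntegrableOn (fun s => F s ^ (-q)) (Ioi t₀)) (hβ : ContinuousOn βb (Ici r₀))
    (hβpos : ∀ t ∈ Ici r₀, 0 < βb t) (hk : 0 < k)
    (hR : k * clampedPrimitive βb r₀ R = ∫ s in Ioi t₀, F s ^ (-q)) (hr : r ∈ Ico r₀ R) :
    t₀ ≤ blowUpProfile F βb q t₀ r₀ k r := by
  refine ((strictMono_clampedPrimitive_rpow_neg hF hFpos).le_invFun_iff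
    (range_clampedPrimitive_rpow_neg hF hFpos hint)
    (mul_clampedPrimitive_lt hβ hβpos hk hR hr.2)).2 ?_
  rw [clampedPrimitive_self]
  exact mul_nonneg hk.le
    (clampedPrimitive_self (ψ := βb) ▸ (strictMono_clampedPrimitive hβ hβpos).monotone hr.1)

theorem blowUpProfile_le {u : ℝ} (hF : ContinuousOn F (Ici t₀)) (hFpos : ∀ t ∈ Ici t₀, 0 < F t)
    (hint : IntegrableOn (fun s => F s ^ (-q)) (Ioi t₀)) (hβ : ContinuousOn βb (Ici r₀))
    (hβpos : ∀ t ∈ Ici r₀, 0 < βb t) (hk : 0 < k)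
    (hR : k * clampedPrimitive βb r₀ R = ∫ s in Ioi t₀, F s ^ (-q)) (hr : r < R)
    (hu : k * clampedPrimitive βb r₀ r ≤ clampedPrimitive (fun s => F s ^ (-q)) t₀ u) :
    blowUpProfile F βb q t₀ r₀ k r ≤ u :=
  ((strictMono_clampedPrimitive_rpow_neg hF hFpos).invFun_le_iff
    (range_clampedPrimitive_rpow_neg hF hFpos hint)
    (mul_clampedPrimitive_lt hβ hβpos hk hR hr)).2 hu

theorem hasDerivAt_blowUpProfile (hF : ContinuousOn F (Ici t₀)) (hFpos : ∀ t ∈ Ici t₀, 0 < F t)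
    (hint : IntegrableOn (fun s => F s ^ (-q)) (Ioi t₀)) (hβ : ContinuousOn βb (Ici r₀))
    (hβpos : ∀ t ∈ Ici r₀, 0 < βb t) (hk : 0 < k)
    (hR : k * clampedPrimitive βb r₀ R = ∫ s in Ioi t₀, F s ^ (-q)) (hr : r ∈ Ico r₀ R) :
    HasDerivAt (blowUpProfile F βb q t₀ r₀ k)
      (k * βb r * F (blowUpProfile F βb q t₀ r₀ k r) ^ q) r := by
  have hw := le_blowUpProfile hF hFpos hint hβ hβpos hk hR hr
  have hrange := range_clampedPrimitive_rpow_neg hF hFpos hint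
  refine ((hasDerivAt_invFun_of_range_mem_nhds
    (hasDerivAt_clampedPrimitive (continuousOn_rpow_neg hF hFpos))
    (fun u => Real.rpow_pos_of_pos (hFpos _ (le_max_right u t₀)) _)
    (hrange ▸ Iio_mem_nhds (mul_clampedPrimitive_lt hβ hβpos hk hR hr.2))).comp r
    ((hasDerivAt_clampedPrimitive hβ r).const_mul k)).congr_deriv ?_
  change (F (max (blowUpProfile F βb q t₀ r₀ k r) t₀) ^ (-q))⁻¹ * (k * βb (max r r₀)) = _
  rw [max_eq_left hr.1, max_eq_left hw, Real.rpow_neg (hFpos _ hw).le, inv_inv, mul_comm]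

theorem tendsto_blowUpProfile (hF : ContinuousOn F (Ici t₀)) (hFpos : ∀ t ∈ Ici t₀, 0 < F t)
    (hint : IntegrableOn (fun s => F s ^ (-q)) (Ioi t₀)) (hβ : ContinuousOn βb (Ici r₀))
    (hβpos : ∀ t ∈ Ici r₀, 0 < βb t) (hk : 0 < k)
    (hR : k * clampedPrimitive βb r₀ R = ∫ s in Ioi t₀, F s ^ (-q)) :
    Tendsto (blowUpProfile F βb q t₀ r₀ k) (𝓝[<] R) atTop :=
  (strictMono_clampedPrimitive_rpow_neg hF hFpos).tendsto_invFun_comp_mul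
    (range_clampedPrimitive_rpow_neg hF hFpos hint) (strictMono_clampedPrimitive hβ hβpos)
    (continuous_clampedPrimitive hβ) hk hR

theorem continuousOn_blowUpProfile_deriv (hF : ContinuousOn F (Ici t₀))
    (hFpos : ∀ t ∈ Ici t₀, 0 < F t) (hint : IntegrableOn (fun s => F s ^ (-q)) (Ioi t₀))
    (hβ : ContinuousOn βb (Ici r₀)) (hβpos : ∀ t ∈ Ici r₀, 0 < βb t) (hk : 0 < k)
    (hR : k * clampedPrimitive βb r₀ R = ∫ s in Ioi t₀, F s ^ (-q)) :
    ContinuousOn (fun r => k * βb r * F (blowUpProfile F βb q t₀ r₀ k r) ^ q) (Ico r₀ R) := by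
  have hw r (hr : r ∈ Ico r₀ R) := le_blowUpProfile hF hFpos hint hβ hβpos hk hR hr
  have hFw : ContinuousOn (fun r => F (blowUpProfile F βb q t₀ r₀ k r)) (Ico r₀ R) :=
    hF.comp (fun r hr => (hasDerivAt_blowUpProfile hF hFpos hint hβ hβpos hk hR
      hr).continuousAt.continuousWithinAt) hw
  exact (continuousOn_const.mul (hβ.mono Ico_subset_Ici_self)).mul
    (hFw.rpow_const fun r hr => Or.inl (hFpos _ (hw r hr)).ne')

theorem hasDerivAt_blowUpProfile_deriv {f βb' : ℝ → ℝ} (hF : ∀ t, HasDerivAt F (f t) t)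
    (hFpos : ∀ t ∈ Ici t₀, 0 < F t) (hint : IntegrableOn (fun s => F s ^ (-q)) (Ioi t₀))
    (hβ : ∀ t ∈ Ici r₀, HasDerivWithinAt βb (βb' t) (Ici r₀) t) (hβpos : ∀ t ∈ Ici r₀, 0 < βb t)
    (hk : 0 < k) (hR : k * clampedPrimitive βb r₀ R = ∫ s in Ioi t₀, F s ^ (-q))
    (hr : r ∈ Ioo r₀ R) :
    let w := blowUpProfile F βb q t₀ r₀ k
    HasDerivAt (fun r => k * βb r * F (w r) ^ q)
      (k * βb' r * F (w r) ^ q + k * βb r * (f (w r) * (k * βb r * F (w r) ^ q) * q *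
        F (w r) ^ (q - 1))) r := by
  have hFc : ContinuousOn F (Ici t₀) := fun t _ => (hF t).continuousAt.continuousWithinAt
  have hβc : ContinuousOn βb (Ici r₀) := fun t ht => (hβ t ht).continuousWithinAt
  have hr' := Ioo_subset_Ico_self hr
  have hFw := (hF _).comp r (hasDerivAt_blowUpProfile hFc hFpos hint hβc hβpos hk hR hr')
  exact ((hβ r hr.1.le).hasDerivAt (Ici_mem_nhds hr.1) |>.const_mul k).mul
    (hFw.rpow_const (Or.inl (hFpos _ (le_blowUpProfile hFc hFpos hint hβc hβpos hk hR hr')).ne'))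

end blowUpProfile

theorem stmt_18_general
    (φ φ' : ℝ → ℝ)
    (hφd : ∀ t : ℝ, 0 < t → HasDerivAt φ (φ' t) t)
    (hφ'pos : ∀ t : ℝ, 0 < t → 0 < φ' t)
    (C : ℝ) (hC : 1 ≤ C)
    (hφbound : ∀ t : ℝ, 0 < t → t * φ' t ≤ C * φ t)
    (χ : ℝ) (hχ : 0 < χ)
    (ηb₀ : ℝ)
    (f : ℝ → ℝ) (hfc : Continuous f)
    (hfpos : ∀ t : ℝ, ηb₀ < t → 0 < f t)
    (hfCinc : CIncreasingOn C f (Ioi ηb₀))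
    (r₀ : ℝ)
    (β : ℝ → ℝ) (hβpos : ∀ t ∈ Ici r₀, 0 < β t)
    (βb βb' : ℝ → ℝ)
    (hβbd : ∀ t ∈ Ici r₀, HasDerivWithinAt βb (βb' t) (Ici r₀) t)
    (hβbpos : ∀ t ∈ Ici r₀, 0 < βb t)
    (hβb'np : ∀ t ∈ Ici r₀, βb' t ≤ 0)
    (hβbnotint : ¬ IntegrableOn βb (Ioi r₀))
    (θ : ℝ → ℝ)
    (hbdd : ∃ M : ℝ, ∀ t ∈ Ici r₀, max (βb t) (θ t) * βb t ^ χ / β t ≤ M)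
    (F : ℝ → ℝ) (hF : ∀ t, F t = ∫ s in ηb₀..t, f s)
    (hKO : ∃ T : ℝ, ηb₀ < T ∧
      IntegrableOn (fun s => F s ^ (-(1 / (χ + 1)))) (Ioi T)) :
    ∀ ε : ℝ, 0 < ε → ∀ δ lam : ℝ, 0 < δ → δ < lam → ∀ r₁ : ℝ, r₀ < r₁ →
      ∃ R₁ : ℝ, r₁ < R₁ ∧ ∃ w w' g : ℝ → ℝ,
        (∀ r ∈ Ico r₀ R₁, HasDerivWithinAt w (w' r) (Ico r₀ R₁) r) ∧
        ContinuousOn w' (Ico r₀ R₁) ∧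
        (∀ r ∈ Ico r₀ R₁, ηb₀ + δ ≤ w r) ∧
        (∀ r ∈ Ioo r₀ R₁, HasDerivAt (fun s => φ (w' s)) (g r) r) ∧
        (∀ r ∈ Ioo r₀ R₁,
          g r + θ r * φ (w' r) ≤ ε * β r * f (w r) * (φ (w' r) / w' r ^ χ)) ∧
        (∀ r ∈ Ico r₀ R₁, 0 < w' r) ∧
        Tendsto w (𝓝[<] R₁) atTop ∧
        (∀ r ∈ Icc r₀ r₁, ηb₀ + δ ≤ w r ∧ w r ≤ ηb₀ + lam) := by
  intro ε hε δ lam hδ hδlam r₁ hr₁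
  obtain ⟨M, hM⟩ := hbdd
  obtain ⟨T, -, hT⟩ := hKO
  set q := 1 / (χ + 1) with hqdef
  have hq : q * (χ + 1) = 1 := by rw [hqdef]; field_simp
  have hC0 : 0 < C := one_pos.trans_le hC
  set t₀ := ηb₀ + δ
  have ht₀ : ηb₀ < t₀ := by linarith
  have hFder := hasDerivAt_of_eq_integral hfc hF
  have hFc : ContinuousOn F (Ici t₀) := fun t _ => (hFder t).continuousAt.continuousWithinAt
  have hFpos : ∀ t ∈ Ici t₀, 0 < F t := fun t ht =>
    pos_of_eq_integral hfc hfpos hF (ht₀.trans_le ht)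
  have hint := hT.Ioi_of_continuousOn (continuousOn_rpow_neg hFc hFpos)
  obtain ⟨K, hK⟩ :=
    exists_rpow_le_mul_of_integrableOn hfc hfpos hfCinc hC0.le hF (by positivity) ht₀ hint
  have hβbc : ContinuousOn βb (Ici r₀) := fun t ht => (hβbd t ht).continuousWithinAt
  have hG := strictMono_clampedPrimitive_rpow_neg (q := q) hFc hFpos
  obtain ⟨k, R₁, hk, hkε, hkJ, hr₁R₁, hkR₁⟩ := exists_scale_radius
    (strictMono_clampedPrimitive hβbc hβbpos) (continuous_clampedPrimitive hβbc)
    (tendsto_clampedPrimitive_atTop hβbc hβbpos hβbnotint)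
    (clampedPrimitive_self (ψ := fun s => F s ^ (-q)) ▸ hG (by linarith : t₀ < ηb₀ + lam))
    (range_clampedPrimitive_rpow_neg hFc hFpos hint ▸ mem_range_self (ηb₀ + lam))
    (tendsto_mul_rpow_add_mul_rpow (a := C * q * M) (b := K * M) hχ) hε
  set w := blowUpProfile F βb q t₀ r₀ k
  have hw_ge : ∀ r ∈ Ico r₀ R₁, t₀ ≤ w r := fun r hr =>
    le_blowUpProfile hFc hFpos hint hβbc hβbpos hk hkR₁ hr
  set w' := fun r => k * βb r * F (w r) ^ q
  have hw'pos : ∀ r ∈ Ico r₀ R₁, 0 < w' r := fun r hr =>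
    mul_pos (mul_pos hk (hβbpos r hr.1)) (Real.rpow_pos_of_pos (hFpos _ (hw_ge r hr)) q)
  refine ⟨R₁, hr₁R₁, w, w', fun r => φ' (w' r) *
      (k * βb' r * F (w r) ^ q + k * βb r * (f (w r) * w' r * q * F (w r) ^ (q - 1))),
    fun r hr => (hasDerivAt_blowUpProfile hFc hFpos hint hβbc hβbpos hk hkR₁ hr).hasDerivWithinAt,
    continuousOn_blowUpProfile_deriv hFc hFpos hint hβbc hβbpos hk hkR₁, hw_ge, fun r hr => ?_,
    fun r hr => ?_, hw'pos, tendsto_blowUpProfile hFc hFpos hint hβbc hβbpos hk hkR₁,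
    fun r hr => ⟨hw_ge r ⟨hr.1, hr.2.trans_lt hr₁R₁⟩, ?_⟩⟩
  · exact (hφd _ (hw'pos r (Ioo_subset_Ico_self hr))).comp r
      (hasDerivAt_blowUpProfile_deriv hFder hFpos hint hβbd hβbpos hk hkR₁ hr)
  · have hr' := Ioo_subset_Ico_self hr
    exact supersolution_inequality_at hC0 (by positivity) hq hk (hβbpos r hr'.1) (hβb'np r hr'.1)
      (hβpos r hr'.1) (hM r hr'.1) (hFpos _ (hw_ge r hr'))
      (hfpos _ (ht₀.trans_le (hw_ge r hr'))) (hK _ (hw_ge r hr')) hkε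
      (hφ'pos _ (hw'pos r hr')).le (hφbound _ (hw'pos r hr'))
  · exact blowUpProfile_le hFc hFpos hint hβbc hβbpos hk hkR₁ (hr.2.trans_lt hr₁R₁)
      ((mul_le_mul_of_nonneg_left ((strictMono_clampedPrimitive hβbc hβbpos).monotone hr.2)
        hk.le).trans hkJ)

/-- Proposition 8.16: analogue of the blowing-up supersolution construction
for operators of mean curvature type (`t φ'(t) ≤ C φ(t)`), with gradient term
`l(t) = φ(t)/t^χ` and the modified Keller–Osserman condition
`F^(−1/(χ+1))` integrable at infinity. -/
theorem stmt_18
    (φ φ' : ℝ → ℝ)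
    (hφc : ContinuousOn φ (Ici 0)) (hφ0 : φ 0 = 0)
    (hφd : ∀ t : ℝ, 0 < t → HasDerivAt φ (φ' t) t)
    (hφ'c : ContinuousOn φ' (Ioi 0))
    (hφ'pos : ∀ t : ℝ, 0 < t → 0 < φ' t)
    (C : ℝ) (hC : 1 ≤ C)
    (hφbound : ∀ t : ℝ, 0 < t → t * φ' t ≤ C * φ t)
    (χ : ℝ) (hχ : 0 < χ)
    (ηb₀ : ℝ) (hηb₀ : 0 < ηb₀)
    (f : ℝ → ℝ) (hfc : Continuous f)
    (hfpos : ∀ t : ℝ, ηb₀ < t → 0 < f t)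
    (hfCinc : CIncreasingOn C f (Ioi ηb₀))
    (r₀ : ℝ) (hr₀ : 0 < r₀)
    (β : ℝ → ℝ) (hβc : ContinuousOn β (Ici r₀)) (hβpos : ∀ t ∈ Ici r₀, 0 < β t)
    (βb βb' : ℝ → ℝ)
    (hβbd : ∀ t ∈ Ici r₀, HasDerivWithinAt βb (βb' t) (Ici r₀) t)
    (hβb'c : ContinuousOn βb' (Ici r₀))
    (hβbpos : ∀ t ∈ Ici r₀, 0 < βb t)
    (hβb'np : ∀ t ∈ Ici r₀, βb' t ≤ 0)
    (hβbnotint : ¬ IntegrableOn βb (Ioi r₀))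
    (θ : ℝ → ℝ) (hθc : ContinuousOn θ (Ici r₀)) (hθnn : ∀ t ∈ Ici r₀, 0 ≤ θ t)
    (hbdd : ∃ M : ℝ, ∀ t ∈ Ici r₀, max (βb t) (θ t) * βb t ^ χ / β t ≤ M)
    (F : ℝ → ℝ) (hF : ∀ t, F t = ∫ s in ηb₀..t, f s)
    (hKO : ∃ T : ℝ, ηb₀ < T ∧
      IntegrableOn (fun s => F s ^ (-(1 / (χ + 1)))) (Ioi T)) :
    ∀ ε : ℝ, 0 < ε → ∀ δ lam : ℝ, 0 < δ → δ < lam → ∀ r₁ : ℝ, r₀ < r₁ →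
      ∃ R₁ : ℝ, r₁ < R₁ ∧ ∃ w w' g : ℝ → ℝ,
        (∀ r ∈ Ico r₀ R₁, HasDerivWithinAt w (w' r) (Ico r₀ R₁) r) ∧
        ContinuousOn w' (Ico r₀ R₁) ∧
        (∀ r ∈ Ico r₀ R₁, ηb₀ + δ ≤ w r) ∧
        (∀ r ∈ Ioo r₀ R₁, HasDerivAt (fun s => φ (w' s)) (g r) r) ∧
        (∀ r ∈ Ioo r₀ R₁,
          g r + θ r * φ (w' r) ≤ ε * β r * f (w r) * (φ (w' r) / w' r ^ χ)) ∧
        (∀ r ∈ Ico r₀ R₁, 0 < w' r) ∧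
        Tendsto w (𝓝[<] R₁) atTop ∧
        (∀ r ∈ Icc r₀ r₁, ηb₀ + δ ≤ w r ∧ w r ≤ ηb₀ + lam) :=
  stmt_18_general φ φ' hφd hφ'pos C hC hφbound χ hχ ηb₀ f hfc hfpos hfCinc r₀ β hβpos βb βb' hβbd
    hβbpos hβb'np hβbnotint θ hbdd F hF hKO
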